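/- arXiv:2302.01573 — 2 statements merged into one kernel-verified Lean document; each statement's English description precedes it below -/
import Mathlib

section
/- Let p ≥ 1 and s_k be the p-hyperbolic functions. Define the p×p circulant matrix W_p(z) with entries W_p(z)_{jk} = s_{(k-j) mod p}(z). Then W_p(z₁ + z₂) = W_p(z₁) · W_p(z₂) for all z₁, z₂ ∈ ℂ, and W_p(0) = I. -/
open Complex Finset

noncomputable def zeta (p m : ℕ) : ℂ := Complex.exp (2 * Real.pi * Complex.I * m / p)

noncomputable def phyp (p k : ℕ) (z : ℂ) : ℂ :=
  (1 / p) * ∑ m ∈ Finset.range p, ((zeta p m)⁻¹) ^ k * Complex.exp (z * zeta p m)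

noncomputable def Wmat (p : ℕ) (z : ℂ) : Matrix (Fin p) (Fin p) ℂ :=
  Matrix.of fun j k : Fin p => phyp p ((k - j : Fin p) : ℕ) z

noncomputable def omg (p : ℕ) : ℂ := Complex.exp (2 * Real.pi * Complex.I / p)

lemma zeta_eq (p m : ℕ) : zeta p m = omg p ^ m := by
  rw [zeta, omg, ← Complex.exp_nat_mul]
  ring_nf

lemma omg_prim (p : ℕ) (hp : 1 ≤ p) : IsPrimitiveRoot (omg p) p :=
  Complex.isPrimitiveRoot_exp p (by omega)

lemma orth (p : ℕ) (hp : 1 ≤ p) (m n : ℕ) (hm : m < p) (hn : n < p) :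
    ∑ l ∈ range p, ((omg p ^ m)⁻¹ * omg p ^ n) ^ l = if m = n then (p : ℂ) else 0 := by
  have hprim := omg_prim p hp
  have h0 : omg p ≠ 0 := Complex.exp_ne_zero _
  by_cases h : m = n
  · subst h
    simp [inv_mul_cancel₀ (pow_ne_zero m h0)]
  · rw [if_neg h]
    have hr : (omg p ^ m)⁻¹ * omg p ^ n = omg p ^ ((n : ℤ) - m) := by
      rw [zpow_sub₀ h0]
      simp [zpow_natCast, div_eq_mul_inv, mul_comm]
    have hr1 : (omg p ^ m)⁻¹ * omg p ^ n ≠ 1 := by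
      rw [Ne, hr, hprim.zpow_eq_one_iff_dvd]
      intro hdvd
      have hmn : m ≡ n [MOD p] := Nat.modEq_iff_dvd.mpr hdvd
      have := hmn.eq_of_lt_of_lt hm hn
      exact h this
    rw [geom_sum_eq hr1]
    have hrp : ((omg p ^ m)⁻¹ * omg p ^ n) ^ p = 1 := by
      rw [mul_pow, inv_pow, ← pow_mul, ← pow_mul, mul_comm m p, mul_comm n p, pow_mul, pow_mul,
        hprim.pow_eq_one, one_pow, one_pow, inv_one, one_mul]
    rw [hrp, sub_self, zero_div]

lemma pow_mod_p (p : ℕ) (c : ℂ) (h1 : c ^ p = 1) (x : ℕ) : c ^ (x % p) = c ^ x := by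
  conv_rhs => rw [← Nat.div_add_mod x p, pow_add, pow_mul, h1, one_pow, one_mul]

lemma pow_fin_sub (p : ℕ) (hp : 1 ≤ p) (c : ℂ) (h0 : c ≠ 0) (h1 : c ^ p = 1) (a b : Fin p) :
    c ^ ((a - b : Fin p) : ℕ) = c ^ (a : ℕ) * (c ^ (b : ℕ))⁻¹ := by
  have hb : (b : ℕ) ≤ p := le_of_lt b.isLt
  have hsub : ((a - b : Fin p) : ℕ) = (p - b + a) % p := by
    rw [Fin.sub_def]
  rw [hsub, pow_mod_p p c h1, pow_add]
  have hinv : c ^ (p - (b : ℕ)) = (c ^ (b : ℕ))⁻¹ := by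
    have : c ^ (p - (b : ℕ)) * c ^ (b : ℕ) = 1 := by
      rw [← pow_add, Nat.sub_add_cancel hb, h1]
    field_simp at this ⊢
    linear_combination this
  rw [hinv, mul_comm]

lemma omg_ne_zero (p : ℕ) : omg p ≠ 0 := Complex.exp_ne_zero _

lemma omg_inv_pow_p (p : ℕ) (hp : 1 ≤ p) (m : ℕ) : ((omg p ^ m)⁻¹) ^ p = 1 := by
  rw [inv_pow, ← pow_mul, mul_comm m p, pow_mul, (omg_prim p hp).pow_eq_one, one_pow, inv_one]

lemma phyp_fin_sub (p : ℕ) (hp : 1 ≤ p) (a b : Fin p) (z : ℂ) :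
    phyp p ((a - b : Fin p) : ℕ) z =
      (1 / p) * ∑ m ∈ range p,
        ((omg p ^ m)⁻¹) ^ (a : ℕ) * (((omg p ^ m)⁻¹) ^ (b : ℕ))⁻¹ * Complex.exp (z * omg p ^ m) := by
  rw [phyp]
  congr 1
  refine Finset.sum_congr rfl fun m _ => ?_
  rw [zeta_eq]
  congr 1
  exact pow_fin_sub p hp _ (inv_ne_zero (pow_ne_zero _ (omg_ne_zero p)))
    (omg_inv_pow_p p hp m) a b

lemma key (p : ℕ) (hp : 1 ≤ p) (z₁ z₂ : ℂ) (j k : Fin p) :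
    ∑ l : Fin p, phyp p ((l - j : Fin p) : ℕ) z₁ * phyp p ((k - l : Fin p) : ℕ) z₂ =
      phyp p ((k - j : Fin p) : ℕ) (z₁ + z₂) := by
  have hP : (p : ℂ) ≠ 0 := Nat.cast_ne_zero.mpr (by omega)
  calc ∑ l : Fin p, phyp p ((l - j : Fin p) : ℕ) z₁ * phyp p ((k - l : Fin p) : ℕ) z₂
      = ∑ l : Fin p, ((1/p) * (1/p)) * ∑ m ∈ range p, ∑ n ∈ range p,
          (((omg p ^ m)⁻¹) ^ (l : ℕ) * (((omg p ^ m)⁻¹) ^ (j : ℕ))⁻¹ * Complex.exp (z₁ * omg p ^ m)) *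
          (((omg p ^ n)⁻¹) ^ (k : ℕ) * (((omg p ^ n)⁻¹) ^ (l : ℕ))⁻¹ * Complex.exp (z₂ * omg p ^ n)) := by
        refine Finset.sum_congr rfl fun l _ => ?_
        rw [phyp_fin_sub p hp l j z₁, phyp_fin_sub p hp k l z₂, mul_mul_mul_comm,
          Finset.sum_mul_sum]
    _ = ((1/p) * (1/p)) * ∑ m ∈ range p, ∑ n ∈ range p,
          ((((omg p ^ m)⁻¹) ^ (j : ℕ))⁻¹ * ((omg p ^ n)⁻¹) ^ (k : ℕ) *
            Complex.exp (z₁ * omg p ^ m) * Complex.exp (z₂ * omg p ^ n)) *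
          (if m = n then (p : ℂ) else 0) := by
        rw [← Finset.mul_sum]
        congr 1
        rw [Finset.sum_comm]
        refine Finset.sum_congr rfl fun m hm => ?_
        rw [Finset.sum_comm]
        refine Finset.sum_congr rfl fun n hn => ?_
        rw [← orth p hp m n (mem_range.mp hm) (mem_range.mp hn), Finset.mul_sum,
          ← Fin.sum_univ_eq_sum_range (fun l => _ * ((omg p ^ m)⁻¹ * omg p ^ n) ^ l) p]
        refine Finset.sum_congr rfl fun l _ => ?_
        rw [mul_pow]
        rw [show (((omg p ^ n)⁻¹) ^ (l : ℕ))⁻¹ = (omg p ^ n) ^ (l : ℕ) by rw [← inv_pow, inv_inv]]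
        ring
    _ = (1/p) * ∑ m ∈ range p,
          ((omg p ^ m)⁻¹) ^ (k : ℕ) * (((omg p ^ m)⁻¹) ^ (j : ℕ))⁻¹ *
            Complex.exp ((z₁ + z₂) * omg p ^ m) := by
        rw [Finset.mul_sum, Finset.mul_sum]
        refine Finset.sum_congr rfl fun m hm => ?_
        rw [Finset.sum_eq_single m (fun n _ hn => by rw [if_neg (Ne.symm hn), mul_zero])
          (fun h => absurd hm h)]
        have he : Complex.exp (z₁ * omg p ^ m) * Complex.exp (z₂ * omg p ^ m) =
            Complex.exp ((z₁ + z₂) * omg p ^ m) := by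
          rw [← Complex.exp_add]; ring_nf
        rw [if_pos rfl, ← he]
        have harr : ∀ C : ℂ, (1/(p:ℂ)) * (1/(p:ℂ)) * (C * p) = (1/(p:ℂ)) * C := by
          intro C; field_simp
        rw [harr]
        ring
    _ = phyp p ((k - j : Fin p) : ℕ) (z₁ + z₂) := by
        rw [phyp_fin_sub p hp k j (z₁ + z₂)]

theorem Wmat_add_hom (p : ℕ) (hp : 1 ≤ p) (z₁ z₂ : ℂ) :
    Wmat p (z₁ + z₂) = Wmat p z₁ * Wmat p z₂ ∧ Wmat p 0 = 1 := by
  have hP : (p : ℂ) ≠ 0 := Nat.cast_ne_zero.mpr (by omega)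
  constructor
  · ext j k
    rw [Matrix.mul_apply]
    simp only [Wmat, Matrix.of_apply]
    exact (key p hp z₁ z₂ j k).symm
  · ext j k
    have : NeZero p := ⟨by omega⟩
    simp only [Wmat, Matrix.of_apply, Matrix.one_apply, phyp]
    have h1 : ∀ m ∈ range p, ((zeta p m)⁻¹) ^ (((k - j : Fin p) : ℕ)) * Complex.exp (0 * zeta p m)
        = ((omg p ^ (((k - j : Fin p) : ℕ)))⁻¹ * omg p ^ 0) ^ m := by
      intro m _
      rw [zeta_eq, zero_mul, Complex.exp_zero, mul_one, pow_zero, mul_one, ← inv_pow, ← inv_pow,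
        ← pow_mul, ← pow_mul, mul_comm]
    rw [Finset.sum_congr rfl h1, orth p hp _ 0 (k - j).isLt (by omega)]
    by_cases h : j = k
    · subst h
      simp [sub_self]
    · have hkj : (k - j : Fin p) ≠ 0 := sub_ne_zero.mpr (Ne.symm h)
      have hd : ¬ (((k - j : Fin p) : ℕ) = 0) := by
        intro h0
        exact hkj (Fin.ext h0)
      rw [if_neg hd, if_neg h, mul_zero]
end

section
/- For all real y ≥ 0, √3 · tanh(y√3/2) ≥ sin(3y/2), with equality if and only if y = 0. -/
open Real

/-- Generic helper: a function vanishing at 0 with nonneg derivative is nonneg on `[0, ∞)`. -/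
lemma nonneg_of_deriv_aux (f f' : ℝ → ℝ) (hf : ∀ x, HasDerivAt f (f' x) x)
    (h0 : f 0 = 0) (hd : ∀ x, 0 ≤ x → 0 ≤ f' x) {x : ℝ} (hx : 0 ≤ x) : 0 ≤ f x := by
  have hm : MonotoneOn f (Set.Ici (0 : ℝ)) := by
    apply monotoneOn_of_deriv_nonneg (convex_Ici 0)
    · exact fun z _ => (hf z).differentiableAt.continuousAt.continuousWithinAt
    · exact fun z _ => (hf z).differentiableAt.differentiableWithinAt
    · intro z hz
      rw [(hf z).deriv]
      exact hd z (le_of_lt (by simpa using hz))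
  calc (0 : ℝ) = f 0 := h0.symm
    _ ≤ f x := hm (by simp) (by simpa using hx) hx

lemma sin_ge_cubic {x : ℝ} (hx : 0 ≤ x) : x - x ^ 3 / 6 ≤ Real.sin x := by
  have := nonneg_of_deriv_aux (fun z => Real.sin z - (z - z ^ 3 / 6))
    (fun z => Real.cos z - (1 - z ^ 2 / 2))
    (fun z => by
      have h1 := Real.hasDerivAt_sin z
      have h2 : HasDerivAt (fun z : ℝ => z - z ^ 3 / 6) (1 - z ^ 2 / 2) z := by
        have := ((hasDerivAt_id z).sub ((hasDerivAt_pow 3 z).div_const 6))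
        exact this.congr_deriv (by push_cast; ring)
      exact h1.sub h2)
    (by simp)
    (fun z _ => sub_nonneg.2 (Real.one_sub_sq_div_two_le_cos)) hx
  linarith

lemma cos_le_quartic (x : ℝ) : Real.cos x ≤ 1 - x ^ 2 / 2 + x ^ 4 / 24 := by
  have main : ∀ z : ℝ, 0 ≤ z → Real.cos z ≤ 1 - z ^ 2 / 2 + z ^ 4 / 24 := by
    intro z hz
    have h := nonneg_of_deriv_aux (fun w => (1 - w ^ 2 / 2 + w ^ 4 / 24) - Real.cos w)
      (fun w => (-w + w ^ 3 / 6) + Real.sin w)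
      (fun w => by
        have h1 : HasDerivAt (fun w : ℝ => 1 - w ^ 2 / 2 + w ^ 4 / 24) (-w + w ^ 3 / 6) w := by
          have := (((hasDerivAt_const w (1:ℝ)).sub ((hasDerivAt_pow 2 w).div_const 2)).add
            ((hasDerivAt_pow 4 w).div_const 24))
          exact this.congr_deriv (by push_cast; ring)
        have := h1.sub (Real.hasDerivAt_cos w)
        exact this.congr_deriv (by ring))
      (by simp)
      (fun w hw => by have := sin_ge_cubic hw; linarith) hz
    replace h : 0 ≤ (1 - z ^ 2 / 2 + z ^ 4 / 24) - Real.cos z := h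
    linarith
  have h := main |x| (abs_nonneg x)
  have h2 : |x| ^ 2 = x ^ 2 := sq_abs x
  have h4 : |x| ^ 4 = x ^ 4 := by
    rw [pow_abs, abs_of_nonneg (by positivity)]
  rw [Real.cos_abs, h2, h4] at h
  exact h

lemma sin_le_quintic {x : ℝ} (hx : 0 ≤ x) :
    Real.sin x ≤ x - x ^ 3 / 6 + x ^ 5 / 120 := by
  have := nonneg_of_deriv_aux (fun z => (z - z ^ 3 / 6 + z ^ 5 / 120) - Real.sin z)
    (fun z => (1 - z ^ 2 / 2 + z ^ 4 / 24) - Real.cos z)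
    (fun z => by
      have h1 : HasDerivAt (fun z : ℝ => z - z ^ 3 / 6 + z ^ 5 / 120)
          (1 - z ^ 2 / 2 + z ^ 4 / 24) z := by
        have := (((hasDerivAt_id z).sub ((hasDerivAt_pow 3 z).div_const 6)).add
          ((hasDerivAt_pow 5 z).div_const 120))
        exact this.congr_deriv (by push_cast; ring)
      exact h1.sub (Real.hasDerivAt_sin z))
    (by simp)
    (fun z _ => sub_nonneg.2 (cos_le_quartic z)) hx
  linarith

lemma sinh_le_mul_cosh {t : ℝ} (ht : 0 ≤ t) : Real.sinh t ≤ t * Real.cosh t := by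
  have := nonneg_of_deriv_aux (fun z => z * Real.cosh z - Real.sinh z)
    (fun z => z * Real.sinh z)
    (fun z => by
      have h1 := ((hasDerivAt_id z).mul (Real.hasDerivAt_cosh z)).sub (Real.hasDerivAt_sinh z)
      exact h1.congr_deriv (by simp [id]))
    (by simp)
    (fun z hz => mul_nonneg hz ((Real.sinh_nonneg_iff.2 hz))) ht
  replace this : 0 ≤ t * Real.cosh t - Real.sinh t := this
  linarith

lemma cubic_le_tanh {t : ℝ} (ht : 0 ≤ t) : t - t ^ 3 / 3 ≤ Real.tanh t := by
  have key := nonneg_of_deriv_aux (fun z => Real.sinh z - (z - z ^ 3 / 3) * Real.cosh z)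
    (fun z => z ^ 2 * Real.cosh z - (z - z ^ 3 / 3) * Real.sinh z)
    (fun z => by
      have h1 : HasDerivAt (fun z : ℝ => z - z ^ 3 / 3) (1 - z ^ 2) z := by
        have := (hasDerivAt_id z).sub ((hasDerivAt_pow 3 z).div_const 3)
        exact this.congr_deriv (by push_cast; ring)
      have h2 := (Real.hasDerivAt_sinh z).sub (h1.mul (Real.hasDerivAt_cosh z))
      exact h2.congr_deriv (by ring))
    (by simp)
    (fun z hz => by
      show 0 ≤ z ^ 2 * Real.cosh z - (z - z ^ 3 / 3) * Real.sinh z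
      have h1 := sinh_le_mul_cosh hz
      have h2 := (Real.sinh_nonneg_iff.2 hz)
      have h3 := Real.cosh_pos z
      nlinarith [mul_le_mul_of_nonneg_left h1 hz,
        mul_nonneg (mul_nonneg hz (mul_nonneg hz hz)) h2]) ht
  replace key : 0 ≤ Real.sinh t - (t - t ^ 3 / 3) * Real.cosh t := key
  rw [Real.tanh_eq_sinh_div_cosh, le_div_iff₀ (Real.cosh_pos t)]
  linarith

theorem tanh_sin_inequality (y : ℝ) (hy : 0 ≤ y) :
    Real.sqrt 3 * Real.tanh (y * Real.sqrt 3 / 2) ≥ Real.sin (3 * y / 2) ∧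
    (Real.sqrt 3 * Real.tanh (y * Real.sqrt 3 / 2) = Real.sin (3 * y / 2) ↔ y = 0) := by
  set s := Real.sqrt 3 with hs_def
  have hs2 : s ^ 2 = 3 := Real.sq_sqrt (by norm_num)
  have hs0 : 0 < s := Real.sqrt_pos.2 (by norm_num)
  have hs1 : 1 < s := by nlinarith
  have key : 0 < y → Real.sin (3 * y / 2) < s * Real.tanh (y * s / 2) := by
    intro hy0
    set t := y * s / 2 with ht_def
    have ht0 : 0 < t := by positivity
    rcases le_total y 1 with hy1 | hy1
    · -- small y: polynomial bounds
      have htanh := cubic_le_tanh ht0.le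
      have hx0 : 0 ≤ 3 * y / 2 := by linarith
      have hsin := sin_le_quintic hx0
      have hL : s * (t - t ^ 3 / 3) ≤ s * Real.tanh t :=
        mul_le_mul_of_nonneg_left htanh hs0.le
      have hexp : s * (t - t ^ 3 / 3) = 3 * y / 2 - 3 * y ^ 3 / 8 := by
        rw [ht_def]; linear_combination (y / 2 - y ^ 3 * (s ^ 2 + 3) / 24) * hs2
      have hgap : 3 * y / 2 - (3 * y / 2) ^ 3 / 6 + (3 * y / 2) ^ 5 / 120
          < 3 * y / 2 - 3 * y ^ 3 / 8 := by
        have hy2 : y ^ 2 ≤ 1 := by nlinarith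
        have h3pos : 0 < y ^ 3 := by positivity
        have h53 : y ^ 5 ≤ y ^ 3 := by nlinarith
        nlinarith
      calc Real.sin (3 * y / 2) ≤ 3 * y / 2 - (3 * y / 2) ^ 3 / 6 + (3 * y / 2) ^ 5 / 120 := hsin
        _ < 3 * y / 2 - 3 * y ^ 3 / 8 := hgap
        _ = s * (t - t ^ 3 / 3) := hexp.symm
        _ ≤ s * Real.tanh t := hL
    · -- large y: s * tanh t > 1 ≥ sin
      have hts : s / 2 ≤ t := by
        rw [ht_def]; nlinarith
      have hsinh : s / 2 ≤ Real.sinh t := by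
        have h1 : t ≤ Real.sinh t := (Real.self_le_sinh_iff).2 ht0.le
        linarith
      have hcosh := Real.cosh_pos t
      have hsinhpos : 0 < Real.sinh t := by nlinarith
      have hsq : Real.cosh t ^ 2 < (s * Real.sinh t) ^ 2 := by
        have := Real.cosh_sq' t
        nlinarith
      have hlt : Real.cosh t < s * Real.sinh t := by
        have hn : 0 ≤ s * Real.sinh t := by positivity
        exact lt_of_pow_lt_pow_left₀ 2 hn hsq
      have h1 : 1 < s * Real.tanh t := by
        rw [Real.tanh_eq_sinh_div_cosh]
        rw [mul_div_assoc']
        rw [lt_div_iff₀ hcosh]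
        linarith
      calc Real.sin (3 * y / 2) ≤ 1 := Real.sin_le_one _
        _ < s * Real.tanh t := h1
  constructor
  · rcases eq_or_lt_of_le hy with h0 | h0
    · simp [← h0]
    · exact (key h0).le
  · constructor
    · intro heq
      by_contra hne
      have h0 : 0 < y := lt_of_le_of_ne hy (Ne.symm hne)
      exact (key h0).ne' heq
    · intro h; simp [h]
end
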